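/- arXiv:1504.04642 — 3 statements merged into one kernel-verified Lean document; each statement's English description precedes it below -/
import Mathlib

section
/- Let Γ be a cocompact Fuchsian group of signature (g; e₁, …, e_r) with hyperbolic coarea 2π(2g − 2 + Σᵢ(1 − 1/eᵢ)) ≤ 2π·a for some real a > 0. If Q is an elementary abelian 2-group quotient of Γ, then the 2-rank of Q is at most ⌊2(a + 2)⌋ − 1. -/
open Real
open scoped commutatorElement

/-- Generators for a cocompact Fuchsian group of signature `(g; e₁, …, e_r)`:
`2g` hyperbolic generators `a₁, b₁, …, a_g, b_g` and `r` elliptic generators `x₁, …, x_r`. -/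
def FuchsianGen (g r : ℕ) : Type := Fin g ⊕ Fin g ⊕ Fin r

/-- The defining relations of a cocompact Fuchsian group of signature `(g; e₁, …, e_r)`:
`xᵢ^{eᵢ} = 1` and `[a₁,b₁]⋯[a_g,b_g]·x₁⋯x_r = 1`. -/
def FuchsianRels (g r : ℕ) (e : Fin r → ℕ) : Set (FreeGroup (FuchsianGen g r)) :=
  {w | (∃ i : Fin r, w = (FreeGroup.of (Sum.inr (Sum.inr i))) ^ (e i)) ∨
    w = ((List.finRange g).map fun i =>
          ⁅FreeGroup.of (Sum.inl i : FuchsianGen g r), FreeGroup.of (Sum.inr (Sum.inl i) : FuchsianGen g r)⁆).prod *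
        ((List.finRange r).map fun i => FreeGroup.of (Sum.inr (Sum.inr i))).prod}

/-- A cocompact Fuchsian group of signature `(g; e₁, …, e_r)`, presented by its standard
generators and relations. -/
def FuchsianGroup (g r : ℕ) (e : Fin r → ℕ) : Type := PresentedGroup (FuchsianRels g r e)

noncomputable instance (g r : ℕ) (e : Fin r → ℕ) : Group (FuchsianGroup g r e) :=
  inferInstanceAs (Group (PresentedGroup (FuchsianRels g r e)))

/-!
Sending the standard generators of `Γ` to `V = (ZMod 2)^k` gives `2g + r` vectors spanning `V`;
the long relation forces the `r` elliptic images to sum to zero, so for `r > 0` one of them is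
redundant and `k ≤ 2g + r - 1`, while for `r = 0` we only get `k ≤ 2g`. Since each `eᵢ ≥ 2`, the
coarea bound gives `2g - 2 + r/2 ≤ a`, and both estimates fit under `2(a + 2) - 1`.
-/

open Module Submodule

theorem finrank_lt_card_of_span_eq_top_of_not_linearIndependent {K V ι : Type*} [DivisionRing K]
    [AddCommGroup V] [Module K V] [Fintype ι] {v : ι → V} (hv : span K (Set.range v) = ⊤)
    (hli : ¬LinearIndependent K v) : finrank K V < Fintype.card ι := by
  have hrank : finrank K V = (Set.range v).finrank K := by rw [Set.finrank, hv, finrank_top]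
  rw [hrank]
  exact (finrank_range_le_card v).lt_of_ne
    fun h => hli (linearIndependent_iff_card_eq_finrank_span.2 h.symm)

theorem not_linearIndependent_of_sum_eq_zero {K V ι : Type*} [Ring K] [Nontrivial K]
    [AddCommGroup V] [Module K V] [Fintype ι] [Nonempty ι] {v : ι → V} (hv : ∑ i, v i = 0) :
    ¬LinearIndependent K v := fun hli =>
  one_ne_zero (Fintype.linearIndependent_iff.1 hli (fun _ => (1 : K)) (by simpa using hv)
    (Classical.arbitrary ι))

theorem span_range_toAdd_eq_top_of_surjective {G V K ι : Type*} [Group G] [AddCommGroup V]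
    [Ring K] [Module K V] {x : ι → G} (hx : Subgroup.closure (Set.range x) = ⊤)
    {φ : G →* Multiplicative V} (hφ : Function.Surjective φ) :
    span K (Set.range fun i => (φ (x i)).toAdd) = ⊤ := by
  have hmem (y : G) : (φ y).toAdd ∈ span K (Set.range fun i => (φ (x i)).toAdd) := by
    have hy : y ∈ Subgroup.closure (Set.range x) := hx ▸ Subgroup.mem_top y
    induction hy using Subgroup.closure_induction with
    | mem _ hy => obtain ⟨i, rfl⟩ := hy; exact subset_span ⟨i, rfl⟩
    | one => simp
    | mul _ _ _ _ h₁ h₂ => simpa using add_mem h₁ h₂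
    | inv _ _ h => simpa using neg_mem h
  refine eq_top_iff'.2 fun v => ?_
  obtain ⟨y, hy⟩ := hφ (.ofAdd v)
  simpa [hy] using hmem y

theorem card_div_two_le_sum_one_sub_one_div {ι : Type*} [Fintype ι] {e : ι → ℕ}
    (he : ∀ i, 2 ≤ e i) : (Fintype.card ι : ℝ) / 2 ≤ ∑ i, (1 - 1 / (e i : ℝ)) := by
  have hterm (i : ι) : (1 / 2 : ℝ) ≤ 1 - 1 / (e i : ℝ) := by
    have : 1 / (e i : ℝ) ≤ 1 / 2 := one_div_le_one_div_of_le two_pos (by exact_mod_cast he i)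
    linarith
  calc (Fintype.card ι : ℝ) / 2 = ∑ _i : ι, (1 / 2 : ℝ) := by simp [div_eq_mul_inv]
    _ ≤ _ := Finset.sum_le_sum fun i _ => hterm i

namespace FuchsianGroup

variable {g r : ℕ} {e : Fin r → ℕ}

/-- Indexed by the unfolded `FuchsianGen g r`, so that `gen (.inl i)`, `gen (.inr (.inl i))` and
`gen (.inr (.inr i))` (the `aᵢ`, `bᵢ`, `xᵢ`) typecheck without unfolding. -/
def gen : Fin g ⊕ Fin g ⊕ Fin r → FuchsianGroup g r e := PresentedGroup.of

theorem closure_range_gen : Subgroup.closure (Set.range (gen (g := g) (e := e))) = ⊤ :=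
  PresentedGroup.closure_range_of _

theorem prod_commutator_mul_prod_elliptic :
    ((List.finRange g).map fun i =>
        ⁅(gen (.inl i) : FuchsianGroup g r e), gen (.inr (.inl i))⁆).prod *
      ((List.finRange r).map fun i => (gen (.inr (.inr i)) : FuchsianGroup g r e)).prod = 1 := by
  have hrel := PresentedGroup.one_of_mem (rels := FuchsianRels g r e) (Or.inr rfl)
  -- `erw`: the relator in `FuchsianRels` mixes `FuchsianGen g r` with its unfolding
  erw [map_mul, map_list_prod, map_list_prod, List.map_map, List.map_map] at hrel
  exact hrel

theorem prod_map_elliptic_eq_one {H : Type*} [CommGroup H] (φ : FuchsianGroup g r e →* H) :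
    ∏ i, φ (gen (.inr (.inr i))) = 1 := by
  have hcomm (x y : H) : ⁅x, y⁆ = 1 := commutatorElement_eq_one_iff_mul_comm.2 (mul_comm x y)
  have hrel := congrArg φ prod_commutator_mul_prod_elliptic
  simpa [map_list_prod, Function.comp_def, map_commutatorElement, hcomm, ← Fin.prod_univ_def]
    using hrel

variable {K V : Type*} [DivisionRing K] [AddCommGroup V] [Module K V]
  {φ : FuchsianGroup g r e →* Multiplicative V}

theorem finrank_le_of_surjective (hφ : Function.Surjective φ) : finrank K V ≤ 2 * g + r := by
  have h := finrank_le_of_span_eq_top (span_range_toAdd_eq_top_of_surjective (K := K)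
    closure_range_gen hφ)
  simpa [two_mul, add_assoc] using h

theorem finrank_lt_of_surjective (hφ : Function.Surjective φ) (hr : 0 < r) :
    finrank K V < 2 * g + r := by
  have : Nonempty (Fin r) := ⟨⟨0, hr⟩⟩
  have hsum : ∑ i, (φ (gen (.inr (.inr i)))).toAdd = 0 := by
    rw [← toAdd_prod, prod_map_elliptic_eq_one]; rfl
  have hdep : ¬LinearIndependent K fun s => (φ (gen s)).toAdd := fun hli =>
    not_linearIndependent_of_sum_eq_zero hsum
      (hli.comp _ (Sum.inr_injective.comp Sum.inr_injective))
  have h := finrank_lt_card_of_span_eq_top_of_not_linearIndependent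
    (span_range_toAdd_eq_top_of_surjective closure_range_gen hφ) hdep
  simpa [two_mul, add_assoc] using h

end FuchsianGroup

theorem fuchsian_two_rank_bound_general
    (g r : ℕ) (e : Fin r → ℕ) (he : ∀ i, 2 ≤ e i)
    (a : ℝ) (ha : 0 < a)
    (harea : 2 * π * (2 * (g : ℝ) - 2 + ∑ i : Fin r, (1 - 1 / (e i : ℝ))) ≤ 2 * π * a)
    (k : ℕ) (Q : Type*) [CommGroup Q]
    (f : FuchsianGroup g r e →* Q) (hf : Function.Surjective f)
    (hQ : Nonempty (Q ≃* (Fin k → Multiplicative (ZMod 2)))) :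
    (k : ℤ) ≤ ⌊2 * (a + 2)⌋ - 1 := by
  obtain ⟨eQ⟩ := hQ
  let φ : FuchsianGroup g r e →* Multiplicative (Fin k → ZMod 2) :=
    ((MulEquiv.funMultiplicative (Fin k) (ZMod 2)).symm.toMonoidHom.comp eQ.toMonoidHom).comp f
  have hφ : Function.Surjective φ :=
    (((MulEquiv.funMultiplicative _ _).symm.surjective.comp eQ.surjective).comp hf :)
  have hrank : finrank (ZMod 2) (Fin k → ZMod 2) = k := finrank_fin_fun _
  have hcoarea : 2 * (g : ℝ) - 2 + r / 2 ≤ a := by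
    have hsum := card_div_two_le_sum_one_sub_one_div he
    rw [Fintype.card_fin] at hsum
    linarith [le_of_mul_le_mul_left harea (by positivity : (0 : ℝ) < 2 * π)]
  rw [le_sub_iff_add_le, Int.le_floor]
  push_cast
  rcases Nat.eq_zero_or_pos r with rfl | hr
  · have hk : (k : ℝ) ≤ 2 * g := by
      exact_mod_cast hrank ▸ FuchsianGroup.finrank_le_of_surjective (K := ZMod 2) hφ
    push_cast at hcoarea
    linarith
  · have hk : (k : ℝ) + 1 ≤ 2 * g + r := by
      exact_mod_cast hrank ▸ FuchsianGroup.finrank_lt_of_surjective (K := ZMod 2) hφ hr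
    linarith [Nat.cast_nonneg (α := ℝ) g]

/-- If a cocompact Fuchsian group of signature `(g; e₁, …, e_r)` has hyperbolic coarea
`2π(2g − 2 + Σᵢ(1 − 1/eᵢ)) ≤ 2π·a` with `a > 0`, then any elementary abelian `2`-group
quotient of it has `2`-rank at most `⌊2(a + 2)⌋ − 1`. -/
theorem fuchsian_two_rank_bound
    (g r : ℕ) (e : Fin r → ℕ) (he : ∀ i, 2 ≤ e i)
    (a : ℝ) (ha : 0 < a)
    (hpos : 0 < 2 * π * (2 * (g : ℝ) - 2 + ∑ i : Fin r, (1 - 1 / (e i : ℝ))))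
    (harea : 2 * π * (2 * (g : ℝ) - 2 + ∑ i : Fin r, (1 - 1 / (e i : ℝ))) ≤ 2 * π * a)
    (k : ℕ) (Q : Type*) [CommGroup Q]
    (f : FuchsianGroup g r e →* Q) (hf : Function.Surjective f)
    (hQ : Nonempty (Q ≃* (Fin k → Multiplicative (ZMod 2)))) :
    (k : ℤ) ≤ ⌊2 * (a + 2)⌋ - 1 :=
  fuchsian_two_rank_bound_general g r e he a ha harea k Q f hf hQ
end

section
/- If h(k,2,B) is a power of 2 dividing the class number h of k, and an inequality of the form 32π² ≥ c₁·R·u·exp(c₂·n − c₃/h(k,2,B)) holds with c₁ = 70.497, c₂ = −0.082, c₃ = 19.075, R ≥ 0.0062·e^{0.738n}, and u ≥ 2, then n ≤ 38. -/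
open Real

/-!
After bounding `R ≥ 0.0062·e^{0.738n}`, `u ≥ 2` and `e^{-19.075/h} ≥ e^{-19.075}`, the hypothesis
gives `0.874·e^{0.656n − 19.075} ≤ 32π² < 318`. For `n ≥ 39` the exponent is at least `6`, and
`0.874·e^6 > 352`, a contradiction.
-/

theorem Real.lt_exp_six : (403 : ℝ) < exp 6 :=
  calc (403 : ℝ) < 2.7182818283 ^ 6 := by norm_num
    _ < exp 1 ^ 6 := by gcongr; exact exp_one_gt_d9
    _ = exp 6 := by rw [← exp_nat_mul]; norm_num

theorem Real.pi_sq_lt : π ^ 2 < 9.9225 :=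
  calc π ^ 2 < 3.15 ^ 2 := by gcongr; exact pi_lt_d2
    _ = 9.9225 := by norm_num

theorem degree_bound_38_general
    (n : ℕ) (h : ℕ)
    (R u : ℝ) (hR : 0.0062 * Real.exp (0.738 * n) ≤ R) (hu : 2 ≤ u)
    (hineq : 70.497 * R * u * Real.exp (-0.082 * n - 19.075 / h) ≤ 32 * π ^ 2) :
    n ≤ 38 := by
  by_contra! hn
  have hn39 : (39 : ℝ) ≤ n := by exact_mod_cast hn
  have hh : 19.075 / (h : ℝ) ≤ 19.075 := div_nat_le_self_of_nonnneg (by norm_num) h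
  have hR0 : 0 ≤ R := le_trans (by positivity) hR
  have hexp_add : exp (0.738 * n) * exp (-0.082 * n - 19.075) = exp (0.656 * n - 19.075) := by
    rw [← exp_add]; ring_nf
  have key : 0.8741628 * exp (0.656 * n - 19.075) ≤ 32 * π ^ 2 :=
    calc 0.8741628 * exp (0.656 * n - 19.075)
        = 70.497 * (0.0062 * exp (0.738 * n)) * 2 * exp (-0.082 * n - 19.075) := by
          rw [← hexp_add]; ring
      _ ≤ 70.497 * R * u * exp (-0.082 * n - 19.075 / h) := by
          have hu0 : 0 ≤ u := by linarith
          gcongr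
      _ ≤ 32 * π ^ 2 := hineq
  have hexp : exp 6 ≤ exp (0.656 * n - 19.075) := exp_le_exp.mpr (by linarith)
  linarith [lt_exp_six, pi_sq_lt]

/-- If `h(k,2,B)` is a power of 2 dividing the class number, and
`70.497·R·u·exp(−0.082·n − 19.075/h) ≤ 32π²` holds with `R ≥ 0.0062·e^{0.738n}` and
`u ≥ 2`, then `n ≤ 38`. -/
theorem degree_bound_38
    (n : ℕ) (hn : 2 ≤ n) (h : ℕ) (hpow : ∃ j : ℕ, h = 2 ^ j)
    (R u : ℝ) (hR : 0.0062 * Real.exp (0.738 * n) ≤ R) (hu : 2 ≤ u)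
    (hineq : 70.497 * R * u * Real.exp (-0.082 * n - 19.075 / h) ≤ 32 * π ^ 2) :
    n ≤ 38 :=
  degree_bound_38_general n h R u hR hu hineq
end

section
/- With the hypotheses of the previous covolume inequality (constants c₁ = 70.497, c₂ = −0.082, c₃ = 19.075, regulator bound R ≥ 0.0062·e^{0.738n}, u ≥ 2, bound 32π²), if n = 24 then h(k,2,B) ≤ 1, i.e., h(k,2,B) = 1. -/
/-!
If `h = 2 ^ j` with `j ≥ 1` then `h ≥ 2`, and the left side of the covolume inequality is
increasing in `R`, `u` and `h`. Evaluating it at `R = 0.0062·e^{0.738·24}`, `u = 2`, `h = 2`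
gives `70.497·0.0062·2·e^{6.2065} > 338`, while `32π² < 318`.
-/

open Real

theorem mul_mul_mul_exp_sub_div_le {c a b R R' u u' h h' : ℝ} (hc : 0 ≤ c) (hb : 0 ≤ b)
    (hR : 0 ≤ R) (hRR' : R ≤ R') (hu : 0 ≤ u) (huu' : u ≤ u') (hh : 0 < h) (hhh' : h ≤ h') :
    c * R * u * exp (a - b / h) ≤ c * R' * u' * exp (a - b / h') := by
  have hR' := hR.trans hRR'
  have hu' := hu.trans huu'
  gcongr

theorem thirty_two_mul_pi_sq_lt :
    32 * π ^ 2 < 70.497 * (0.0062 * exp (0.738 * 24)) * 2 * exp (-0.082 * 24 - 19.075 / 2) := by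
  have hexp : exp (0.738 * 24) * exp (-0.082 * 24 - 19.075 / 2) = exp 6.2065 := by
    rw [← exp_add]; norm_num
  have hexp_gt : (2.7 : ℝ) ^ 6 < exp 6.2065 :=
    calc (2.7 : ℝ) ^ 6 < exp 1 ^ 6 := by gcongr; linarith [exp_one_gt_d9]
      _ = exp 6 := by rw [← exp_nat_mul]; norm_num
      _ ≤ exp 6.2065 := exp_le_exp.2 (by norm_num)
  have hpi : π ^ 2 < 3.15 ^ 2 := by gcongr; linarith [pi_lt_d2]
  nlinarith

/-- With the same covolume inequality in degree `n = 24`, the quantity `h = h(k,2,B)`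
(a power of 2) satisfies `h ≤ 1`, i.e. `h = 1`. -/
theorem class_number_bound_degree_24
    (h : ℕ) (hpow : ∃ j : ℕ, h = 2 ^ j)
    (R u : ℝ) (hR : 0.0062 * Real.exp (0.738 * 24) ≤ R) (hu : 2 ≤ u)
    (hineq : 70.497 * R * u * Real.exp (-0.082 * 24 - 19.075 / h) ≤ 32 * π ^ 2) :
    h = 1 := by
  obtain ⟨j, rfl⟩ := hpow
  by_contra hne
  have hj : j ≠ 0 := by rintro rfl; exact hne rfl
  have h_two_le : (2 : ℝ) ≤ (2 ^ j : ℕ) := by exact_mod_cast Nat.one_lt_two_pow_iff.2 hj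
  have hmono := mul_mul_mul_exp_sub_div_le (c := 70.497) (a := -0.082 * 24) (b := 19.075)
    (by norm_num) (by norm_num) (by positivity) hR (by norm_num) hu (by norm_num) h_two_le
  linarith [thirty_two_mul_pi_sq_lt]
end
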